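/- If G is a strongly connected, weight-balanced digraph with Laplacian L, then zero is a simple eigenvalue of L + Lᵀ. -/

import Mathlib

/-!
The rows of `L` always sum to zero and, by weight balance, so do its columns; hence the all-ones
vector is killed by `L` and by `Lᵀ`. Conversely, weight balance turns the quadratic form of
`L + Lᵀ` into the Dirichlet energy `∑ i j, A i j (v i - v j)²`. For `v` in the kernel this sum of
nonnegative terms vanishes, so `v` is constant along every edge of positive weight, hence along
every directed path, hence on the whole strongly connected digraph.
-/

open Matrix Finset

namespace Matrix

variable {ι R : Type*} [Fintype ι]

section CommRing

variable [CommRing R] {A : Matrix ι ι R}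

def IsWeightBalanced (A : Matrix ι ι R) : Prop :=
  ∀ i, ∑ j, A i j = ∑ j, A j i

theorem sum_mul_sq_right_eq_left (hA : IsWeightBalanced A) (v : ι → R) :
    ∑ i, ∑ j, A i j * v j ^ 2 = ∑ i, ∑ j, A i j * v i ^ 2 := by
  calc ∑ i, ∑ j, A i j * v j ^ 2 = ∑ j, (∑ i, A i j) * v j ^ 2 := by
        rw [Finset.sum_comm]; simp only [Finset.sum_mul]
    _ = ∑ j, (∑ i, A j i) * v j ^ 2 := Fintype.sum_congr _ _ fun j => by rw [hA j]
    _ = ∑ i, ∑ j, A i j * v i ^ 2 := by simp only [Finset.sum_mul]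

variable [DecidableEq ι]

def laplacian (A : Matrix ι ι R) : Matrix ι ι R :=
  diagonal (fun i => ∑ j, A i j) - A

theorem laplacian_mulVec (A : Matrix ι ι R) (v : ι → R) :
    laplacian A *ᵥ v = fun i => ∑ j, A i j * (v i - v j) := by
  ext i
  rw [laplacian, sub_mulVec, Pi.sub_apply, mulVec_diagonal]
  simp [mulVec, dotProduct, mul_sub, Finset.sum_mul]

theorem vecMul_laplacian (A : Matrix ι ι R) (v : ι → R) :
    v ᵥ* laplacian A = fun j => (∑ i, A j i) * v j - ∑ i, v i * A i j := by
  ext j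
  rw [laplacian, vecMul_sub, Pi.sub_apply, vecMul_diagonal]
  simp [vecMul, dotProduct, mul_comm]

theorem laplacian_mulVec_one (A : Matrix ι ι R) : laplacian A *ᵥ 1 = 0 := by
  ext i
  simp [laplacian_mulVec]

theorem one_vecMul_laplacian (hA : IsWeightBalanced A) : 1 ᵥ* laplacian A = 0 := by
  ext j
  simp [vecMul_laplacian, hA j]

theorem laplacian_add_transpose_mulVec_one (hA : IsWeightBalanced A) :
    (laplacian A + (laplacian A)ᵀ) *ᵥ 1 = 0 := by
  rw [add_mulVec, mulVec_transpose, laplacian_mulVec_one, one_vecMul_laplacian hA, add_zero]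

theorem dotProduct_laplacian_mulVec (A : Matrix ι ι R) (v : ι → R) :
    v ⬝ᵥ (laplacian A *ᵥ v) = ∑ i, ∑ j, A i j * (v i ^ 2 - v i * v j) := by
  simp only [laplacian_mulVec, dotProduct, Finset.mul_sum]
  exact Fintype.sum_congr _ _ fun i => Fintype.sum_congr _ _ fun j => by ring

theorem sum_mul_sub_sq_eq_dotProduct (hA : IsWeightBalanced A) (v : ι → R) :
    ∑ i, ∑ j, A i j * (v i - v j) ^ 2 = v ⬝ᵥ ((laplacian A + (laplacian A)ᵀ) *ᵥ v) := by
  have hexpand : ∀ i j, A i j * (v i - v j) ^ 2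
      = A i j * v j ^ 2 + 2 * (A i j * (v i ^ 2 - v i * v j)) - A i j * v i ^ 2 := by
    intro i j; ring
  simp only [hexpand, Finset.sum_sub_distrib, Finset.sum_add_distrib, ← Finset.mul_sum,
    sum_mul_sq_right_eq_left hA, add_mulVec, dotProduct_add, dotProduct_transpose_mulVec,
    dotProduct_laplacian_mulVec]
  ring

end CommRing

theorem eq_of_sum_mul_sub_sq_eq_zero [CommRing R] [LinearOrder R] [IsStrictOrderedRing R]
    {A : Matrix ι ι R} (hA : ∀ i j, 0 ≤ A i j) {v : ι → R}
    (hv : ∑ i, ∑ j, A i j * (v i - v j) ^ 2 = 0) {a b : ι} (hab : 0 < A a b) : v a = v b := by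
  have hterm_nonneg : ∀ i j, 0 ≤ A i j * (v i - v j) ^ 2 :=
    fun i j => mul_nonneg (hA i j) (sq_nonneg _)
  have hrow : ∑ j, A a j * (v a - v j) ^ 2 = 0 :=
    (Finset.sum_eq_zero_iff_of_nonneg fun i _ => Finset.sum_nonneg fun j _ =>
      hterm_nonneg i j).mp hv a (mem_univ a)
  have hterm : A a b * (v a - v b) ^ 2 = 0 :=
    (Finset.sum_eq_zero_iff_of_nonneg fun j _ => hterm_nonneg a j).mp hrow b (mem_univ b)
  rw [mul_eq_zero, pow_eq_zero_iff two_ne_zero, sub_eq_zero] at hterm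
  exact hterm.resolve_left hab.ne'

end Matrix

theorem Relation.exists_eq_const_of_transGen {α β : Type*} [Nonempty β] {r : α → α → Prop}
    {f : α → β} (hr : ∀ i j, i ≠ j → Relation.TransGen r i j) (hf : ∀ a b, r a b → f a = f b) :
    ∃ c, f = fun _ => c := by
  rcases isEmpty_or_nonempty α with hα | ⟨⟨i₀⟩⟩
  · exact ⟨Classical.arbitrary β, funext isEmptyElim⟩
  refine ⟨f i₀, funext fun i => ?_⟩
  rcases eq_or_ne i₀ i with rfl | hne
  · rfl
  have hpath : Relation.TransGen (· = ·) (f i₀) (f i) := (hr i₀ i hne).lift f hf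
  rw [Relation.transGen_eq_self] at hpath
  exact hpath.symm

/-- If `G` is a strongly connected, weight-balanced digraph with Laplacian `L`,
then zero is a simple eigenvalue of `L + Lᵀ`: the all-ones vector is in the kernel of
`L + Lᵀ` and the kernel is exactly the span of the all-ones vector. -/
theorem zero_simple_eigenvalue_of_strongly_connected_weight_balanced
    {n : ℕ} (A : Matrix (Fin n) (Fin n) ℝ)
    (hA : ∀ i j, 0 ≤ A i j)
    (hconn : ∀ i j : Fin n, i ≠ j → Relation.TransGen (fun a b => 0 < A a b) i j)
    (hbal : ∀ i, ∑ j, A i j = ∑ j, A j i)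
    (L : Matrix (Fin n) (Fin n) ℝ)
    (hL : L = Matrix.diagonal (fun i => ∑ j, A i j) - A) :
    (L + Lᵀ) *ᵥ (fun _ => (1 : ℝ)) = 0 ∧
    ∀ v : Fin n → ℝ, (L + Lᵀ) *ᵥ v = 0 → ∃ c : ℝ, v = fun _ => c := by
  change L = laplacian A at hL
  subst hL
  refine ⟨laplacian_add_transpose_mulVec_one hbal, fun v hv => ?_⟩
  have henergy : ∑ i, ∑ j, A i j * (v i - v j) ^ 2 = 0 := by
    rw [sum_mul_sub_sq_eq_dotProduct hbal, hv, dotProduct_zero]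
  exact Relation.exists_eq_const_of_transGen hconn fun a b hab =>
    eq_of_sum_mul_sub_sq_eq_zero hA henergy hab
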